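/- Let R : ℝⁿ × ℝʳ → ℝⁿ × ℝʳ be smooth with R(q,y) = (Rⁱ(q,y), R^γ(q,y)) satisfying Rⁱ(q,0) = q, R^γ(q,0) = 0, and D_y R^γ(q,0) = Id_{ℝʳ}. Then the tangent lift TR : (ℝⁿ × ℝʳ) × (ℝⁿ × ℝʳ) → (ℝⁿ × ℝʳ) × (ℝⁿ × ℝʳ), TR(q,y;q̇,ẏ) = (R(q,y); D_qR(q,y)·q̇ + D_yR(q,y)·ẏ), satisfies: TR(q,0;q̇,0) = (q,0;q̇,0), and the derivative of the fiber components (R^γ, (TR)^γ) with respect to (y,ẏ) at (q,0;q̇,0) is the identity on ℝʳ × ℝʳ. -/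

import Mathlib

/-- Local-coordinate content of Theorem 5.3: let
`R : ℝⁿ × ℝʳ → ℝⁿ × ℝʳ` be smooth with `Rⁱ(q,0) = q`, `R^γ(q,0) = 0` and
`D_y R^γ(q,0) = Id`.  Then the tangent lift
`TR(q,y;qdot,ydot) = (R(q,y); DR(q,y)·(qdot,ydot))` satisfies `TR(q,0;qdot,0) = (q,0;qdot,0)`, and the
derivative of the fiber components `(R^γ, (TR)^γ)` with respect to `(y,ydot)` at
`(q,0;qdot,0)` is the identity on `ℝʳ × ℝʳ`. -/
theorem tangent_lift_is_generalized_discretization (n r : ℕ)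
    (R : (Fin n → ℝ) × (Fin r → ℝ) → (Fin n → ℝ) × (Fin r → ℝ))
    (hsmooth : ContDiff ℝ (⊤ : ℕ∞) R)
    (h1 : ∀ q : Fin n → ℝ, (R (q, 0)).1 = q)
    (h2 : ∀ q : Fin n → ℝ, (R (q, 0)).2 = 0)
    (h3 : ∀ q : Fin n → ℝ,
      fderiv ℝ (fun y : Fin r → ℝ => (R (q, y)).2) 0
        = ContinuousLinearMap.id ℝ (Fin r → ℝ))
    (TR : ((Fin n → ℝ) × (Fin r → ℝ)) × ((Fin n → ℝ) × (Fin r → ℝ)) →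
          ((Fin n → ℝ) × (Fin r → ℝ)) × ((Fin n → ℝ) × (Fin r → ℝ)))
    (hTR : ∀ p, TR p = (R p.1, fderiv ℝ R p.1 p.2)) :
    ∀ (q qdot : Fin n → ℝ),
      TR ((q, 0), (qdot, 0)) = ((q, 0), (qdot, 0)) ∧
      fderiv ℝ (fun yv : (Fin r → ℝ) × (Fin r → ℝ) =>
          (((TR ((q, yv.1), (qdot, yv.2))).1.2, (TR ((q, yv.1), (qdot, yv.2))).2.2) :
            (Fin r → ℝ) × (Fin r → ℝ))) (0, 0)
        = ContinuousLinearMap.id ℝ ((Fin r → ℝ) × (Fin r → ℝ)) := by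
  intro q qdot
  have hdiff : Differentiable ℝ R := hsmooth.differentiable (by simp)
  have hf' : ContDiff ℝ (⊤ : ℕ∞) (fderiv ℝ R) := hsmooth.fderiv_right (by simp)
  have hdiff' : Differentiable ℝ (fderiv ℝ R) := hf'.differentiable (by simp)
  -- Lemma A : D R (q',0) ∘ inl = inl
  have hA : ∀ q' : (Fin n → ℝ), (fderiv ℝ R (q', 0)).comp (ContinuousLinearMap.inl ℝ (Fin n → ℝ) (Fin r → ℝ))
      = ContinuousLinearMap.inl ℝ (Fin n → ℝ) (Fin r → ℝ) := by
    intro q'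
    have hc : HasFDerivAt (fun x : (Fin n → ℝ) => R (x, 0))
        ((fderiv ℝ R (q', 0)).comp (ContinuousLinearMap.inl ℝ (Fin n → ℝ) (Fin r → ℝ))) q' :=
      (hdiff (q', 0)).hasFDerivAt.comp q' (hasFDerivAt_prodMk_left q' 0)
    have heq : (fun x : (Fin n → ℝ) => R (x, 0)) = fun x : (Fin n → ℝ) => ((x, 0) : (Fin n → ℝ) × (Fin r → ℝ)) := by
      funext x; exact Prod.ext (h1 x) (h2 x)
    rw [heq] at hc
    exact hc.unique (hasFDerivAt_prodMk_left q' 0)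
  -- Lemma B : snd ∘ D R (q',0) ∘ inr = id
  have hB : ∀ q' : (Fin n → ℝ), (ContinuousLinearMap.snd ℝ (Fin n → ℝ) (Fin r → ℝ)).comp
      ((fderiv ℝ R (q', 0)).comp (ContinuousLinearMap.inr ℝ (Fin n → ℝ) (Fin r → ℝ)))
      = ContinuousLinearMap.id ℝ (Fin r → ℝ) := by
    intro q'
    have hc : HasFDerivAt (fun y : (Fin r → ℝ) => (R (q', y)).2)
        ((ContinuousLinearMap.snd ℝ (Fin n → ℝ) (Fin r → ℝ)).comp
          ((fderiv ℝ R (q', 0)).comp (ContinuousLinearMap.inr ℝ (Fin n → ℝ) (Fin r → ℝ)))) 0 :=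
      ((ContinuousLinearMap.snd ℝ (Fin n → ℝ) (Fin r → ℝ)).hasFDerivAt.comp _
        (hdiff (q', 0)).hasFDerivAt).comp 0 (hasFDerivAt_prodMk_right q' 0)
    rw [← hc.fderiv]
    exact h3 q'
  set f'' := fderiv ℝ (fderiv ℝ R) (q, 0) with hf''
  -- Claim C1 : (f'' (qdot,0) (0,h)).2 = 0
  have hC1 : ∀ h : (Fin r → ℝ), ((f'' (qdot, 0)) (0, h)).2 = 0 := by
    intro h
    -- Θ : A ↦ (A (0,h)).2 as a CLM
    set Θ : (((Fin n → ℝ) × (Fin r → ℝ)) →L[ℝ] ((Fin n → ℝ) × (Fin r → ℝ))) →L[ℝ] (Fin r → ℝ) :=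
      (ContinuousLinearMap.snd ℝ (Fin n → ℝ) (Fin r → ℝ)).comp
        (ContinuousLinearMap.apply ℝ ((Fin n → ℝ) × (Fin r → ℝ)) ((0, h) : (Fin n → ℝ) × (Fin r → ℝ))) with hΘ
    have hc : HasFDerivAt (fun q' : (Fin n → ℝ) => Θ (fderiv ℝ R (q', 0)))
        (Θ.comp (f''.comp (ContinuousLinearMap.inl ℝ (Fin n → ℝ) (Fin r → ℝ)))) q := by
      have h1' : HasFDerivAt (fun q' : (Fin n → ℝ) => fderiv ℝ R (q', 0))
          (f''.comp (ContinuousLinearMap.inl ℝ (Fin n → ℝ) (Fin r → ℝ))) q :=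
        (hdiff' (q, 0)).hasFDerivAt.comp q (hasFDerivAt_prodMk_left q (0 : Fin r → ℝ))
      exact Θ.hasFDerivAt.comp q h1'
    have hconst : (fun q' : (Fin n → ℝ) => Θ (fderiv ℝ R (q', 0))) = fun _ : (Fin n → ℝ) => h := by
      funext q'
      have := congrArg (fun (L : (Fin r → ℝ) →L[ℝ] (Fin r → ℝ)) => L h) (hB q')
      simpa [Θ] using this
    rw [hconst] at hc
    have h0 : Θ.comp (f''.comp (ContinuousLinearMap.inl ℝ (Fin n → ℝ) (Fin r → ℝ))) = 0 :=
      hc.unique (hasFDerivAt_const h q)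
    have := congrArg (fun (L : (Fin n → ℝ) →L[ℝ] (Fin r → ℝ)) => L qdot) h0
    simpa [Θ] using this
  -- symmetry of the second derivative
  have hsymm : ∀ v w : (Fin n → ℝ) × (Fin r → ℝ), f'' v w = f'' w v :=
    second_derivative_symmetric (f := R) (fun y => (hdiff y).hasFDerivAt)
      (hdiff' (q, 0)).hasFDerivAt
  have hC : ∀ h : (Fin r → ℝ), ((f'' (0, h)) (qdot, 0)).2 = 0 := by
    intro h; rw [hsymm]; exact hC1 h
  constructor
  · -- part 1
    rw [hTR]
    refine Prod.ext (Prod.ext (h1 q) (h2 q)) ?_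
    have := congrArg (fun (L : (Fin n → ℝ) →L[ℝ] ((Fin n → ℝ) × (Fin r → ℝ))) => L qdot) (hA q)
    simpa using this
  · -- part 2
    have hG : (fun yv : (Fin r → ℝ) × (Fin r → ℝ) =>
        (((TR ((q, yv.1), (qdot, yv.2))).1.2, (TR ((q, yv.1), (qdot, yv.2))).2.2)
          : (Fin r → ℝ) × (Fin r → ℝ)))
        = fun yv : (Fin r → ℝ) × (Fin r → ℝ) =>
          (((R (q, yv.1)).2, ((fderiv ℝ R (q, yv.1)) (qdot, yv.2)).2)
            : (Fin r → ℝ) × (Fin r → ℝ)) := by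
      funext yv; rw [hTR]
    rw [hG]
    set u1 : ((Fin r → ℝ) × (Fin r → ℝ)) →L[ℝ] ((Fin n → ℝ) × (Fin r → ℝ)) :=
      (0 : ((Fin r → ℝ) × (Fin r → ℝ)) →L[ℝ] (Fin n → ℝ)).prod
        (ContinuousLinearMap.fst ℝ (Fin r → ℝ) (Fin r → ℝ)) with hu1
    set u2 : ((Fin r → ℝ) × (Fin r → ℝ)) →L[ℝ] ((Fin n → ℝ) × (Fin r → ℝ)) :=
      (0 : ((Fin r → ℝ) × (Fin r → ℝ)) →L[ℝ] (Fin n → ℝ)).prod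
        (ContinuousLinearMap.snd ℝ (Fin r → ℝ) (Fin r → ℝ)) with hu2
    have hin1 : HasFDerivAt
        (fun yv : (Fin r → ℝ) × (Fin r → ℝ) => ((q, yv.1) : (Fin n → ℝ) × (Fin r → ℝ)))
        u1 (0, 0) := HasFDerivAt.prodMk (hasFDerivAt_const q _) hasFDerivAt_fst
    have hin2 : HasFDerivAt
        (fun yv : (Fin r → ℝ) × (Fin r → ℝ) => ((qdot, yv.2) : (Fin n → ℝ) × (Fin r → ℝ)))
        u2 (0, 0) := HasFDerivAt.prodMk (hasFDerivAt_const qdot _) hasFDerivAt_snd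
    have hG1 : HasFDerivAt (fun yv : (Fin r → ℝ) × (Fin r → ℝ) => (R (q, yv.1)).2)
        ((ContinuousLinearMap.snd ℝ (Fin n → ℝ) (Fin r → ℝ)).comp
          ((fderiv ℝ R (q, 0)).comp u1)) (0, 0) :=
      (ContinuousLinearMap.snd ℝ (Fin n → ℝ) (Fin r → ℝ)).hasFDerivAt.comp _
        ((hdiff (q, 0)).hasFDerivAt.comp ((0, 0) : (Fin r → ℝ) × (Fin r → ℝ)) hin1)
    have hc : HasFDerivAt (fun yv : (Fin r → ℝ) × (Fin r → ℝ) => fderiv ℝ R (q, yv.1))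
        (f''.comp u1) (0, 0) :=
      (hdiff' (q, 0)).hasFDerivAt.comp ((0, 0) : (Fin r → ℝ) × (Fin r → ℝ)) hin1
    have hG2' : HasFDerivAt
        (fun yv : (Fin r → ℝ) × (Fin r → ℝ) => (fderiv ℝ R (q, yv.1)) (qdot, yv.2))
        ((fderiv ℝ R (q, 0)).comp u2 + (f''.comp u1).flip
          ((qdot, 0) : (Fin n → ℝ) × (Fin r → ℝ))) (0, 0) := hc.clm_apply hin2
    have hG2 : HasFDerivAt
        (fun yv : (Fin r → ℝ) × (Fin r → ℝ) => ((fderiv ℝ R (q, yv.1)) (qdot, yv.2)).2)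
        ((ContinuousLinearMap.snd ℝ (Fin n → ℝ) (Fin r → ℝ)).comp
          ((fderiv ℝ R (q, 0)).comp u2 + (f''.comp u1).flip
            ((qdot, 0) : (Fin n → ℝ) × (Fin r → ℝ)))) (0, 0) :=
      (ContinuousLinearMap.snd ℝ (Fin n → ℝ) (Fin r → ℝ)).hasFDerivAt.comp _ hG2'
    have hGd : HasFDerivAt (fun yv : (Fin r → ℝ) × (Fin r → ℝ) =>
        (((R (q, yv.1)).2, ((fderiv ℝ R (q, yv.1)) (qdot, yv.2)).2)
          : (Fin r → ℝ) × (Fin r → ℝ)))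
        (((ContinuousLinearMap.snd ℝ (Fin n → ℝ) (Fin r → ℝ)).comp
            ((fderiv ℝ R (q, 0)).comp u1)).prod
          ((ContinuousLinearMap.snd ℝ (Fin n → ℝ) (Fin r → ℝ)).comp
            ((fderiv ℝ R (q, 0)).comp u2 + (f''.comp u1).flip
              ((qdot, 0) : (Fin n → ℝ) × (Fin r → ℝ))))) (0, 0) := HasFDerivAt.prodMk hG1 hG2
    rw [hGd.fderiv]
    refine ContinuousLinearMap.ext fun hk => Prod.ext ?_ ?_
    · have hb := congrArg (fun (L : (Fin r → ℝ) →L[ℝ] (Fin r → ℝ)) => L hk.1) (hB q)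
      simpa [hu1] using hb
    · have hb := congrArg (fun (L : (Fin r → ℝ) →L[ℝ] (Fin r → ℝ)) => L hk.2) (hB q)
      have hcc := hC hk.1
      simp only [ContinuousLinearMap.coe_comp', Function.comp_apply,
        ContinuousLinearMap.inr_apply, ContinuousLinearMap.coe_snd',
        ContinuousLinearMap.coe_id', id_eq] at hb
      simp only [hu1, hu2, ContinuousLinearMap.prod_apply, ContinuousLinearMap.add_apply,
        ContinuousLinearMap.coe_comp', Function.comp_apply, ContinuousLinearMap.flip_apply,
        ContinuousLinearMap.coe_snd', ContinuousLinearMap.coe_fst',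
        ContinuousLinearMap.zero_apply, ContinuousLinearMap.coe_id', id_eq]
      rw [Prod.snd_add, hcc, hb]
      simp
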